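/- Fix t ∈ ℝ and let V = (1/√2)[[1,i],[i,1]]. Define a 2×2 matrix-valued function on {z ∈ ℂ : |z| < 1, Im z ≠ 0} by E(z) = diag((z−1)^{−1/4}, (z−1)^{1/4}) · V · diag(e^{2it/3}, e^{−2it/3}) for Im z > 0, and E(z) = diag((z−1)^{−1/4}, (z−1)^{1/4}) · V · [[0,1],[−1,0]] · diag(e^{2it/3}, e^{−2it/3}) for Im z < 0, using the principal branch −π < arg(z−1) < π. Then E extends to a holomorphic matrix-valued function on the whole open unit disc {z : |z| < 1}. -/

import Mathlib

open Complex Matrix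

/-- `V = (1/√2)[[1, i], [i, 1]]`. -/
noncomputable def Vmat : Matrix (Fin 2) (Fin 2) ℂ :=
  ((Real.sqrt 2 : ℂ))⁻¹ • !![1, I; I, 1]

/-!
On the unit disc `1 - z` stays in the slit plane, so `e^{iπα} (1 - z)^α` is holomorphic there.
It equals `(z - 1)^α` for `Im z > 0` and `e^{2πiα} (z - 1)^α` for `Im z < 0`; for `α = ∓1/4`
the extra factors are `∓i`, and these are exactly absorbed by `V [[0,1],[-1,0]] = diag(-i, i) V`.
-/

open scoped Real

lemma log_neg_of_im_neg {w : ℂ} (hw : w.im < 0) : log (-w) = log w + π * I := by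
  rw [log, log, arg_neg_eq_arg_add_pi_of_im_neg hw, norm_neg]
  push_cast
  ring

lemma neg_cpow_of_im_neg {w : ℂ} (hw : w.im < 0) (α : ℂ) :
    (-w) ^ α = exp (π * I * α) * w ^ α := by
  have hw0 : w ≠ 0 := fun h => by simp [h] at hw
  rw [cpow_def_of_ne_zero (neg_ne_zero.mpr hw0), cpow_def_of_ne_zero hw0, log_neg_of_im_neg hw,
    ← exp_add]
  ring_nf

noncomputable def cpowSubOneFromAbove (α z : ℂ) : ℂ :=
  exp (π * I * α) * (1 - z) ^ α

lemma differentiableOn_cpowSubOneFromAbove (α : ℂ) :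
    DifferentiableOn ℂ (cpowSubOneFromAbove α) (Metric.ball 0 1) := by
  intro z hz
  have hslit : 1 - z ∈ slitPlane := by
    simpa [sub_eq_add_neg] using mem_slitPlane_of_norm_lt_one (z := -z) (by simpa using hz)
  exact ((differentiableAt_id.const_sub 1).cpow_const hslit).const_mul _ |>.differentiableWithinAt

lemma cpowSubOneFromAbove_of_im_pos {z : ℂ} (hz : 0 < z.im) (α : ℂ) :
    cpowSubOneFromAbove α z = (z - 1) ^ α := by
  rw [cpowSubOneFromAbove, ← neg_cpow_of_im_neg (by simpa using hz), neg_sub]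

lemma cpowSubOneFromAbove_of_im_neg {z : ℂ} (hz : z.im < 0) (α : ℂ) :
    cpowSubOneFromAbove α z = exp (2 * π * I * α) * (z - 1) ^ α := by
  rw [cpowSubOneFromAbove, ← neg_sub, neg_cpow_of_im_neg (by simpa using hz), ← mul_assoc,
    ← exp_add]
  ring_nf

lemma differentiableOn_diag_mul_apply {a b : ℂ → ℂ} {s : Set ℂ} (ha : DifferentiableOn ℂ a s)
    (hb : DifferentiableOn ℂ b s) (M : Matrix (Fin 2) (Fin 2) ℂ) (j k : Fin 2) :
    DifferentiableOn ℂ (fun z => (!![a z, 0; 0, b z] * M) j k) s := by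
  fin_cases j
  · simpa [Matrix.mul_apply] using ha.mul_const (M 0 k)
  · simpa [Matrix.mul_apply] using hb.mul_const (M 1 k)

lemma Vmat_mul_jump : Vmat * !![0, 1; -1, 0] = !![-I, 0; 0, I] * Vmat := by
  ext i j
  fin_cases i <;> fin_cases j <;> simp [Vmat, mul_comm, ← mul_assoc]

/-- The analytic prefactor of the Bessel local parametrix extends holomorphically
to the unit disc: there is `F`, holomorphic entrywise on `{|z| < 1}`, agreeing with
`diag((z−1)^{−1/4}, (z−1)^{1/4}) V e^{2itσ₃/3}` for `Im z > 0` and with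
`diag((z−1)^{−1/4}, (z−1)^{1/4}) V [[0,1],[−1,0]] e^{2itσ₃/3}` for `Im z < 0`. -/
theorem stmt13 (t : ℝ) :
    ∃ F : ℂ → Matrix (Fin 2) (Fin 2) ℂ,
      (∀ j k : Fin 2, DifferentiableOn ℂ (fun z => F z j k) (Metric.ball (0 : ℂ) 1)) ∧
      (∀ z ∈ Metric.ball (0 : ℂ) 1, 0 < z.im →
        F z = !![(z - 1) ^ (-(1 : ℂ) / 4), 0; 0, (z - 1) ^ ((1 : ℂ) / 4)] * Vmat *
          !![Complex.exp (2 * I * (t : ℂ) / 3), 0;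
             0, Complex.exp (-(2 * I * (t : ℂ) / 3))]) ∧
      (∀ z ∈ Metric.ball (0 : ℂ) 1, z.im < 0 →
        F z = !![(z - 1) ^ (-(1 : ℂ) / 4), 0; 0, (z - 1) ^ ((1 : ℂ) / 4)] * Vmat *
          !![0, 1; -1, 0] *
          !![Complex.exp (2 * I * (t : ℂ) / 3), 0;
             0, Complex.exp (-(2 * I * (t : ℂ) / 3))]) := by
  set T : Matrix (Fin 2) (Fin 2) ℂ :=
    !![Complex.exp (2 * I * (t : ℂ) / 3), 0; 0, Complex.exp (-(2 * I * (t : ℂ) / 3))]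
  refine ⟨fun z => !![cpowSubOneFromAbove (-1 / 4) z, 0; 0, cpowSubOneFromAbove (1 / 4) z] *
    Vmat * T, fun j k => ?_, fun z _ hz => ?_, fun z _ hz => ?_⟩
  · simpa only [Matrix.mul_assoc] using differentiableOn_diag_mul_apply
      (differentiableOn_cpowSubOneFromAbove _) (differentiableOn_cpowSubOneFromAbove _) _ j k
  · simp only [cpowSubOneFromAbove_of_im_pos hz]
  · have hminus : exp (2 * π * I * (-1 / 4)) = -I := by
      rw [show 2 * π * I * (-1 / 4) = -π / 2 * I by ring, exp_neg_pi_div_two_mul_I]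
    have hplus : exp (2 * π * I * (1 / 4)) = I := by
      rw [show 2 * π * I * (1 / 4) = π / 2 * I by ring, exp_pi_div_two_mul_I]
    simp only [cpowSubOneFromAbove_of_im_neg hz, hminus, hplus, Matrix.mul_assoc, Vmat_mul_jump]
    rw [← Matrix.mul_assoc _ !![-I, 0; 0, I], mul_fin_two]
    simp [mul_comm]
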